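/- Let R be a Marot commutative ring that is primary. Then R has exactly one regular prime ideal, namely the ideal (R^• ∖ R^×)·R generated by the regular non-units of R; moreover this ideal is a t-ideal, so that spec_r(R) = t-spec_r(R) = {(R^• ∖ R^×)·R}. -/
import Mathlib


namespace Paper

/-- The set of regular elements of a subset `A` of an ambient commutative ring `T`:
the elements of `A` that are non-zero-divisors on `A`. -/
def reg {T : Type*} [CommRing T] (A : Set T) : Set T :=
  {x | x ∈ A ∧ ∀ y ∈ A, x * y = 0 → y = 0}

/-- The units of a subset `A`: the elements of `A` having an inverse in `A`. -/
def unitsIn {T : Type*} [CommRing T] (A : Set T) : Set T :=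
  {x | x ∈ A ∧ ∃ y ∈ A, x * y = 1}

/-- `(R : X) = {z ∈ T : z·X ⊆ R}`. -/
def colonS {T : Type*} [CommRing T] (R : Subring T) (X : Set T) : Set T :=
  {z : T | ∀ x ∈ X, z * x ∈ R}

/-- The `v`-operation `X ↦ X_v = (X⁻¹)⁻¹ = (R : (R : X))`. -/
def vOp {T : Type*} [CommRing T] (R : Subring T) (X : Set T) : Set T :=
  colonS R (colonS R X)

/-- The `t`-operation: `I_t` is the union of `J_v` over all finitely generated
`R`-submodules `J ⊆ I`; since `(R : J)` only depends on a generating set of `J`,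
we may let `J` range over finite subsets of `I`. -/
def tOp {T : Type*} [CommRing T] (R : Subring T) (I : Set T) : Set T :=
  ⋃ (F : Finset T) (_ : (F : Set T) ⊆ I), vOp R (F : Set T)

/-- `M` is an `R`-submodule of the ambient ring `T`. -/
def IsSubmoduleOf {T : Type*} [CommRing T] (R : Subring T) (M : Set T) : Prop :=
  (0 : T) ∈ M ∧ (∀ x ∈ M, ∀ y ∈ M, x + y ∈ M) ∧
    ∀ r ∈ (R : Set T), ∀ x ∈ M, r * x ∈ M

/-- `I` is an (integral) ideal of the subring `R`. -/
def IsIdealOf {T : Type*} [CommRing T] (R : Subring T) (I : Set T) : Prop :=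
  IsSubmoduleOf R I ∧ I ⊆ (R : Set T)

/-- `P` is a prime ideal of the subring `R`. -/
def IsPrimeIdealOf {T : Type*} [CommRing T] (R : Subring T) (P : Set T) : Prop :=
  IsIdealOf R P ∧ P ≠ (R : Set T) ∧
    ∀ x ∈ (R : Set T), ∀ y ∈ (R : Set T), x * y ∈ P → x ∈ P ∨ y ∈ P

/-- The ideal of the subring `R` generated by a subset `X` of `R`:
all finite sums `∑ rᵢ·xᵢ` with `rᵢ ∈ R`, `xᵢ ∈ X`. -/
def idealGen {T : Type*} [CommRing T] (R : Subring T) (X : Set T) : Set T :=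
  {x : T | ∃ (k : ℕ) (r a : Fin k → T),
    (∀ i, r i ∈ R) ∧ (∀ i, a i ∈ X) ∧ x = ∑ i, r i * a i}

/-- `R` is a Marot ring: every regular integral ideal of `R` is generated by
its regular elements. -/
def IsMarot {T : Type*} [CommRing T] (R : Subring T) : Prop :=
  ∀ I : Set T, IsIdealOf R I → (∃ x ∈ I, x ∈ reg (R : Set T)) →
    I = idealGen R (I ∩ reg (R : Set T))

/-- The ring `R` is primary: the monoid `R^•` of regular elements is primary,
i.e. `R^• ≠ R^×` and for all regular non-units `a`, `b` some power of `b`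
lies in `a·R^•`. -/
def IsPrimaryRing {T : Type*} [CommRing T] (R : Subring T) : Prop :=
  reg (R : Set T) ≠ unitsIn (R : Set T) ∧
    ∀ a ∈ reg (R : Set T), a ∉ unitsIn (R : Set T) →
      ∀ b ∈ reg (R : Set T), b ∉ unitsIn (R : Set T) →
        ∃ n : ℕ, 0 < n ∧ ∃ h ∈ reg (R : Set T), b ^ n = a * h

section Aux

open scoped Pointwise

variable {T : Type*} [CommRing T] (R : Subring T)

lemma unitsIn_subset_reg : unitsIn (R : Set T) ⊆ reg (R : Set T) := by
  rintro x ⟨hxR, y, hyR, hxy⟩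
  refine ⟨hxR, fun w hw hxw => ?_⟩
  calc w = (x * y) * w := by rw [hxy, one_mul]
    _ = y * (x * w) := by ring
    _ = 0 := by rw [hxw, mul_zero]

lemma subset_idealGen {X : Set T} : X ⊆ idealGen R X := by
  intro x hx
  exact ⟨1, fun _ => 1, fun _ => x, fun _ => R.one_mem, fun _ => hx, by simp⟩

lemma idealGen_mono {X Y : Set T} (h : X ⊆ Y) : idealGen R X ⊆ idealGen R Y := by
  rintro x ⟨k, r, a, hr, ha, rfl⟩
  exact ⟨k, r, a, hr, fun i => h (ha i), rfl⟩

lemma idealGen_subset {X I : Set T} (hI : IsSubmoduleOf R I) (hX : X ⊆ I) :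
    idealGen R X ⊆ I := by
  rintro x ⟨k, r, a, hr, ha, rfl⟩
  exact Finset.sum_induction (fun i => r i * a i) (· ∈ I)
    (fun u v hu hv => hI.2.1 u hu v hv) hI.1
    (fun i _ => hI.2.2 (r i) (hr i) (a i) (hX (ha i)))

lemma idealGen_isIdeal {X : Set T} (hX : X ⊆ (R : Set T)) :
    IsIdealOf R (idealGen R X) := by
  constructor
  · refine ⟨⟨0, Fin.elim0, Fin.elim0, fun i => i.elim0, fun i => i.elim0, by simp⟩, ?_, ?_⟩
    · rintro x ⟨k, r, a, hr, ha, rfl⟩ y ⟨l, s, b, hs, hb, rfl⟩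
      refine ⟨k + l, Fin.append r s, Fin.append a b, ?_, ?_, ?_⟩
      · intro i
        induction i using Fin.addCases with
        | left i => simpa [Fin.append_left] using hr i
        | right i => simpa [Fin.append_right] using hs i
      · intro i
        induction i using Fin.addCases with
        | left i => simpa [Fin.append_left] using ha i
        | right i => simpa [Fin.append_right] using hb i
      · rw [Fin.sum_univ_add]
        simp [Fin.append_left, Fin.append_right]
    · rintro c hc x ⟨k, r, a, hr, ha, rfl⟩
      refine ⟨k, fun i => c * r i, a, fun i => R.mul_mem hc (hr i), ha, ?_⟩
      rw [Finset.mul_sum]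
      exact Finset.sum_congr rfl (fun i _ => by ring)
  · rintro x ⟨k, r, a, hr, ha, rfl⟩
    exact Subring.sum_mem R (fun i _ => R.mul_mem (hr i) (hX (ha i)))

lemma one_not_mem_of_ne {I : Set T} (hI : IsIdealOf R I) (hne : I ≠ (R : Set T)) :
    (1 : T) ∉ I := by
  intro h1
  apply hne
  refine Set.Subset.antisymm hI.2 (fun r hr => ?_)
  have := hI.1.2.2 r hr 1 h1
  simpa using this

lemma ne_of_one_not_mem {I : Set T} (h1 : (1 : T) ∉ I) : I ≠ (R : Set T) := by
  intro h
  rw [h] at h1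
  exact h1 R.one_mem

/-- `1 ∉ M = (R^•∖R^×)·R` in a primary ring, via a radical argument. -/
lemma one_not_mem_M [Nontrivial T] (hprim : IsPrimaryRing R)
    {b : T} (hb : b ∈ reg (R : Set T)) (hbU : b ∉ unitsIn (R : Set T)) :
    (1 : T) ∉ idealGen R (reg (R : Set T) \ unitsIn (R : Set T)) := by
  rintro ⟨k, r, a, hr, ha, hsum⟩
  set b' : R := ⟨b, hb.1⟩ with hb'
  have hrad : ∀ i : Fin k, (⟨a i, (ha i).1.1⟩ : R) ∈ (Ideal.span {b'}).radical := by
    intro i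
    obtain ⟨n, hn, h, hh, heq⟩ := hprim.2 b hb hbU (a i) (ha i).1 (ha i).2
    rw [Ideal.mem_radical_iff]
    refine ⟨n, ?_⟩
    rw [Ideal.mem_span_singleton']
    refine ⟨⟨h, hh.1⟩, ?_⟩
    apply Subtype.ext
    push_cast
    rw [heq]
    ring
  have h1 : (1 : R) ∈ (Ideal.span {b'}).radical := by
    have h1eq : (1 : R) = ∑ i : Fin k, (⟨r i, hr i⟩ : R) * ⟨a i, (ha i).1.1⟩ := by
      apply Subtype.ext
      push_cast
      exact hsum
    rw [h1eq]
    exact Ideal.sum_mem _ (fun i _ => Ideal.mul_mem_left _ _ (hrad i))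
  rw [Ideal.mem_radical_iff] at h1
  obtain ⟨n, hn⟩ := h1
  rw [one_pow, Ideal.mem_span_singleton'] at hn
  obtain ⟨c, hc⟩ := hn
  refine hbU ⟨hb.1, (c : T), c.2, ?_⟩
  have := congrArg Subtype.val hc
  push_cast at this
  rw [mul_comm]
  exact this

/-- Every proper regular ideal of a Marot ring is contained in `M`. -/
lemma subset_M_of_proper (hmarot : IsMarot R) {I : Set T} (hI : IsIdealOf R I)
    (hregI : ∃ x ∈ I, x ∈ reg (R : Set T)) (h1 : (1 : T) ∉ I) :
    I ⊆ idealGen R (reg (R : Set T) \ unitsIn (R : Set T)) := by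
  have hM := hmarot I hI hregI
  intro x hx
  rw [hM] at hx
  refine idealGen_mono R ?_ hx
  rintro y ⟨hyI, hyreg⟩
  refine ⟨hyreg, fun hyU => ?_⟩
  obtain ⟨_, z, hz, hyz⟩ := hyU
  apply h1
  have := hI.1.2.2 z hz y hyI
  rwa [mul_comm, hyz] at this

lemma mem_of_pow_mem {P : Set T} (hP : IsPrimeIdealOf R P) {b : T}
    (hb : b ∈ (R : Set T)) : ∀ n : ℕ, 0 < n → b ^ n ∈ P → b ∈ P := by
  intro n
  induction n with
  | zero => intro h; exact absurd h (lt_irrefl 0)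
  | succ n ih =>
    intro _ hbn
    rcases Nat.eq_zero_or_pos n with h0 | hpos
    · subst h0; simpa using hbn
    · rw [pow_succ] at hbn
      rcases hP.2.2 (b ^ n) (Subring.pow_mem R hb n) b hb hbn with h | h
      · exact ih hpos h
      · exact h

/-- `M ⊆ P` for every regular prime `P` of a primary ring. -/
lemma M_subset_prime (hprim : IsPrimaryRing R) {P : Set T}
    (hP : IsPrimeIdealOf R P) (hregP : ∃ x ∈ P, x ∈ reg (R : Set T)) :
    idealGen R (reg (R : Set T) \ unitsIn (R : Set T)) ⊆ P := by
  obtain ⟨p, hpP, hpreg⟩ := hregP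
  have h1P : (1 : T) ∉ P := one_not_mem_of_ne R hP.1 hP.2.1
  have hpU : p ∉ unitsIn (R : Set T) := by
    rintro ⟨_, z, hz, hpz⟩
    apply h1P
    have := hP.1.1.2.2 z hz p hpP
    rwa [mul_comm, hpz] at this
  apply idealGen_subset R hP.1.1
  rintro c ⟨hcreg, hcU⟩
  obtain ⟨n, hn, h, hh, heq⟩ := hprim.2 p hpreg hpU c hcreg hcU
  have hbn : c ^ n ∈ P := by
    rw [heq, mul_comm]
    exact hP.1.1.2.2 h hh.1 p hpP
  exact mem_of_pow_mem R hP hcreg.1 n hn hbn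

lemma mem_colonS {X : Set T} {z : T} : z ∈ colonS R X ↔ ∀ x ∈ X, z * x ∈ R :=
  Iff.rfl

lemma colonS_anti {X Y : Set T} (h : X ⊆ Y) : colonS R Y ⊆ colonS R X :=
  fun z hz x hx => hz x (h hx)

lemma vOp_mono {X Y : Set T} (h : X ⊆ Y) : vOp R X ⊆ vOp R Y :=
  colonS_anti R (colonS_anti R h)

lemma subset_vOp {X : Set T} : X ⊆ vOp R X := by
  intro x hx z hz
  rw [mul_comm]
  exact hz x hx

lemma one_mem_colonS {X : Set T} (hX : X ⊆ (R : Set T)) : (1 : T) ∈ colonS R X :=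
  fun x hx => by rw [one_mul]; exact hX hx

lemma vOp_subset_R {X : Set T} (hX : X ⊆ (R : Set T)) : vOp R X ⊆ (R : Set T) := by
  intro x hx
  have := hx 1 (one_mem_colonS R hX)
  simpa using this

lemma vOp_trans {F G : Set T} {x : T} (hFG : F ⊆ vOp R G) (hx : x ∈ vOp R F) :
    x ∈ vOp R G := by
  intro z hz
  refine hx z (fun f hf => ?_)
  rw [mul_comm]
  exact hFG hf z hz

lemma mem_tOp {I : Set T} {x : T} :
    x ∈ tOp R I ↔ ∃ F : Finset T, (F : Set T) ⊆ I ∧ x ∈ vOp R (F : Set T) := by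
  simp [tOp, Set.mem_iUnion]

lemma subset_tOp {I : Set T} : I ⊆ tOp R I := by
  intro x hx
  rw [mem_tOp]
  exact ⟨{x}, by simpa using hx, subset_vOp R (by simp)⟩

lemma tOp_subset_R {I : Set T} (hI : I ⊆ (R : Set T)) : tOp R I ⊆ (R : Set T) := by
  intro x hx
  rw [mem_tOp] at hx
  obtain ⟨F, hF, hxF⟩ := hx
  exact vOp_subset_R R (hF.trans hI) hxF

lemma tOp_isIdeal {I : Set T} (hI : I ⊆ (R : Set T)) : IsIdealOf R (tOp R I) := by
  refine ⟨⟨?_, ?_, ?_⟩, tOp_subset_R R hI⟩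
  · rw [mem_tOp]
    refine ⟨∅, by simp, fun z _ => ?_⟩
    simpa using R.zero_mem
  · intro x hx y hy
    rw [mem_tOp] at hx hy ⊢
    obtain ⟨F, hF, hxF⟩ := hx
    obtain ⟨G, hG, hyG⟩ := hy
    classical
    refine ⟨F ∪ G, ?_, ?_⟩
    · rw [Finset.coe_union]
      exact Set.union_subset hF hG
    · intro z hz
      rw [add_mul]
      have hxz := vOp_mono R (by rw [Finset.coe_union]; exact Set.subset_union_left) hxF z hz
      have hyz := vOp_mono R (by rw [Finset.coe_union]; exact Set.subset_union_right) hyG z hz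
      exact R.add_mem hxz hyz
  · intro c hc x hx
    rw [mem_tOp] at hx ⊢
    obtain ⟨F, hF, hxF⟩ := hx
    refine ⟨F, hF, fun z hz => ?_⟩
    rw [mul_assoc]
    exact R.mul_mem hc (hxF z hz)

lemma tOp_tOp {I : Set T} : tOp R (tOp R I) ⊆ tOp R I := by
  intro x hx
  rw [mem_tOp] at hx ⊢
  obtain ⟨F, hF, hxF⟩ := hx
  classical
  have hchoice : ∀ f : {y // y ∈ F}, ∃ G : Finset T,
      (G : Set T) ⊆ I ∧ (f : T) ∈ vOp R (G : Set T) := by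
    intro f
    exact (mem_tOp R).1 (hF (Finset.mem_coe.2 f.2))
  choose G hG hfG using hchoice
  refine ⟨F.attach.biUnion G, ?_, ?_⟩
  · intro t ht
    rw [Finset.mem_coe, Finset.mem_biUnion] at ht
    obtain ⟨f, _, htf⟩ := ht
    exact hG f htf
  · refine vOp_trans R (G := ((F.attach.biUnion G : Finset T) : Set T)) ?_ hxF
    intro f hf
    refine vOp_mono R ?_ (hfG ⟨f, Finset.mem_coe.1 hf⟩)
    intro t ht
    rw [Finset.mem_coe, Finset.mem_biUnion]
    exact ⟨⟨f, Finset.mem_coe.1 hf⟩, Finset.mem_attach _ _, Finset.mem_coe.1 ht⟩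

lemma mem_idealGen_union_singleton {Q : Set T} (hQ : IsSubmoduleOf R Q) {x f : T}
    (hf : f ∈ idealGen R (Q ∪ {x})) : ∃ q ∈ Q, ∃ s ∈ (R : Set T), f = q + s * x := by
  obtain ⟨k, r, a, hr, ha, rfl⟩ := hf
  refine Finset.sum_induction (fun i => r i * a i)
    (fun t => ∃ q ∈ Q, ∃ s ∈ (R : Set T), t = q + s * x) ?_ ?_ ?_
  · rintro u v ⟨q1, hq1, s1, hs1, rfl⟩ ⟨q2, hq2, s2, hs2, rfl⟩
    exact ⟨q1 + q2, hQ.2.1 q1 hq1 q2 hq2, s1 + s2, R.add_mem hs1 hs2, by ring⟩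
  · exact ⟨0, hQ.1, 0, R.zero_mem, by ring⟩
  · intro i _
    rcases ha i with hQa | hxa
    · exact ⟨r i * a i, hQ.2.2 (r i) (hr i) (a i) hQa, 0, R.zero_mem, by ring⟩
    · rw [Set.mem_singleton_iff] at hxa
      refine ⟨0, hQ.1, r i, hr i, ?_⟩
      show r i * a i = 0 + r i * x
      rw [hxa]; ring

/-- Existence of a maximal regular `t`-ideal containing a given regular nonunit;
it is prime. -/
lemma exists_prime_t (hreg : ∀ x ∈ reg (R : Set T), IsUnit x)
    {b : T} (hb : b ∈ reg (R : Set T)) (hbU : b ∉ unitsIn (R : Set T)) :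
    ∃ Q : Set T, IsPrimeIdealOf R Q ∧ tOp R Q = Q ∧ b ∈ Q := by
  classical
  set bR : Set T := {z | ∃ r ∈ (R : Set T), z = b * r} with hbR
  have hbRideal : IsIdealOf R bR := by
    refine ⟨⟨⟨0, R.zero_mem, by ring⟩, ?_, ?_⟩, ?_⟩
    · rintro x ⟨r, hr, rfl⟩ y ⟨s, hs, rfl⟩
      exact ⟨r + s, R.add_mem hr hs, by ring⟩
    · rintro c hc x ⟨r, hr, rfl⟩
      exact ⟨c * r, R.mul_mem hc hr, by ring⟩
    · rintro x ⟨r, hr, rfl⟩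
      exact R.mul_mem hb.1 hr
  have hbbR : b ∈ bR := ⟨1, R.one_mem, by ring⟩
  have h1bR : (1 : T) ∉ bR := by
    rintro ⟨r, hr, hr1⟩
    exact hbU ⟨hb.1, r, hr, hr1.symm⟩
  obtain ⟨u, hu⟩ := hreg b hb
  set c : T := ((u⁻¹ : Tˣ) : T) with hc
  have hbc : b * c = 1 := by
    rw [hc, ← hu]
    exact Units.mul_inv u
  have hkey : ∀ F : Set T, F ⊆ bR → vOp R F ⊆ bR := by
    intro F hF x hx
    have hcF : c ∈ colonS R F := by
      intro f hf
      obtain ⟨r, hr, rfl⟩ := hF hf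
      have hcr : c * (b * r) = r := by
        rw [← mul_assoc, mul_comm c b, hbc, one_mul]
      rw [hcr]
      exact hr
    have hxc := hx c hcF
    exact ⟨x * c, hxc, by rw [mul_comm b (x * c), mul_assoc, mul_comm c b, hbc, mul_one]⟩
  have hbRt : tOp R bR = bR := by
    apply Set.Subset.antisymm
    · intro x hx
      rw [mem_tOp] at hx
      obtain ⟨F, hF, hxF⟩ := hx
      exact hkey _ hF hxF
    · exact subset_tOp R
  set S : Set (Set T) := {I | IsIdealOf R I ∧ tOp R I = I ∧ bR ⊆ I ∧ (1 : T) ∉ I}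
    with hS
  have hbRS : bR ∈ S := ⟨hbRideal, hbRt, le_refl _, h1bR⟩
  have hchain : ∀ C ⊆ S, IsChain (fun x1 x2 => x1 ⊆ x2) C → C.Nonempty →
      ∃ ub ∈ S, ∀ s ∈ C, s ⊆ ub := by
    intro C hC hCchain hCne
    obtain ⟨I0, hI0⟩ := hCne
    have hfin : ∀ F : Finset T, (F : Set T) ⊆ ⋃₀ C → ∃ I ∈ C, (F : Set T) ⊆ I := by
      intro F
      induction F using Finset.induction with
      | empty => intro _; exact ⟨I0, hI0, by simp⟩
      | @insert t F' hni ih =>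
        intro hins
        rw [Finset.coe_insert, Set.insert_subset_iff] at hins
        obtain ⟨I, hI, hFI⟩ := ih hins.2
        obtain ⟨J, hJ, htJ⟩ := hins.1
        rcases hCchain.total hI hJ with hIJ | hJI
        · exact ⟨J, hJ, by { rw [Finset.coe_insert, Set.insert_subset_iff]; exact ⟨htJ, hFI.trans hIJ⟩ }⟩
        · exact ⟨I, hI, by { rw [Finset.coe_insert, Set.insert_subset_iff]; exact ⟨hJI htJ, hFI⟩ }⟩
    refine ⟨⋃₀ C, ⟨⟨⟨?_, ?_, ?_⟩, ?_⟩, ?_, ?_, ?_⟩, fun s hs => Set.subset_sUnion_of_mem hs⟩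
    · exact ⟨I0, hI0, (hC hI0).1.1.1⟩
    · rintro x ⟨I, hI, hxI⟩ y ⟨J, hJ, hyJ⟩
      rcases hCchain.total hI hJ with hIJ | hJI
      · exact ⟨J, hJ, (hC hJ).1.1.2.1 x (hIJ hxI) y hyJ⟩
      · exact ⟨I, hI, (hC hI).1.1.2.1 x hxI y (hJI hyJ)⟩
    · rintro r hr x ⟨I, hI, hxI⟩
      exact ⟨I, hI, (hC hI).1.1.2.2 r hr x hxI⟩
    · rintro x ⟨I, hI, hxI⟩
      exact (hC hI).1.2 hxI
    · apply Set.Subset.antisymm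
      · intro x hx
        rw [mem_tOp] at hx
        obtain ⟨F, hF, hxF⟩ := hx
        obtain ⟨I, hI, hFI⟩ := hfin F hF
        have : x ∈ tOp R I := (mem_tOp R).2 ⟨F, hFI, hxF⟩
        rw [(hC hI).2.1] at this
        exact ⟨I, hI, this⟩
      · exact subset_tOp R
    · exact (Set.subset_sUnion_of_mem hI0).trans' (hC hI0).2.2.1
    · rintro ⟨I, hI, h1I⟩
      exact (hC hI).2.2.2 h1I
  obtain ⟨Q, _, hQmax⟩ := zorn_subset_nonempty S hchain bR hbRS
  obtain ⟨hQideal, hQt, hbRQ, h1Q⟩ := hQmax.1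
  have hQR : Q ⊆ (R : Set T) := hQideal.2
  -- step: for x ∈ R \ Q, 1 ∈ (Q + xR)_t
  have hstep : ∀ x ∈ (R : Set T), x ∉ Q →
      ∃ F : Finset T, (F : Set T) ⊆ idealGen R (Q ∪ {x}) ∧
        (1 : T) ∈ vOp R (F : Set T) := by
    intro x hx hxQ
    by_contra hcon
    push_neg at hcon
    set J : Set T := idealGen R (Q ∪ {x}) with hJ
    have hQxR : Q ∪ {x} ⊆ (R : Set T) := by
      intro t ht
      rcases ht with h | h
      · exact hQR h
      · rw [Set.mem_singleton_iff] at h; rw [h]; exact hx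
    have hJR : J ⊆ (R : Set T) := (idealGen_isIdeal R hQxR).2
    have hNmem : tOp R J ∈ S := by
      refine ⟨tOp_isIdeal R hJR, ?_, ?_, ?_⟩
      · exact Set.Subset.antisymm (tOp_tOp R) (subset_tOp R)
      · exact (hbRQ.trans (Set.subset_union_left.trans (subset_idealGen R))).trans
          (subset_tOp R)
      · intro h1
        rw [mem_tOp] at h1
        obtain ⟨F, hF, h1F⟩ := h1
        exact hcon F hF h1F
    have hQsub : Q ⊆ tOp R J :=
      (Set.subset_union_left.trans (subset_idealGen R)).trans (subset_tOp R)
    have := hQmax.2 hNmem hQsub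
    exact hxQ (this (subset_tOp R (subset_idealGen R (Set.mem_union_right _ rfl))))
  have hQprime : ∀ x ∈ (R : Set T), ∀ y ∈ (R : Set T), x * y ∈ Q → x ∈ Q ∨ y ∈ Q := by
    intro x hx y hy hxy
    by_contra hcon
    push_neg at hcon
    obtain ⟨F, hF, h1F⟩ := hstep x hx hcon.1
    obtain ⟨G, hG, h1G⟩ := hstep y hy hcon.2
    have hFG : ((F * G : Finset T) : Set T) ⊆ Q := by
      rw [Finset.coe_mul]
      rintro t ⟨f, hf, g, hg, rfl⟩
      obtain ⟨qf, hqf, rf, hrf, rfl⟩ := mem_idealGen_union_singleton R hQideal.1 (hF hf)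
      obtain ⟨qg, hqg, rg, hrg, rfl⟩ := mem_idealGen_union_singleton R hQideal.1 (hG hg)
      have hmem : qf * qg + ((rg * y) * qf + ((rf * x) * qg + (rf * rg) * (x * y))) ∈ Q := by
        refine hQideal.1.2.1 _ (hQideal.1.2.2 qf (hQR hqf) qg hqg) _
          (hQideal.1.2.1 _ (hQideal.1.2.2 _ (R.mul_mem hrg hy) qf hqf) _
            (hQideal.1.2.1 _ (hQideal.1.2.2 _ (R.mul_mem hrf hx) qg hqg) _
              (hQideal.1.2.2 _ (R.mul_mem hrf hrg) _ hxy)))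
      have heq : (qf + rf * x) * (qg + rg * y)
          = qf * qg + ((rg * y) * qf + ((rf * x) * qg + (rf * rg) * (x * y))) := by ring
      show (qf + rf * x) * (qg + rg * y) ∈ Q
      rw [heq]
      exact hmem
    have h1FG : (1 : T) ∈ vOp R ((F * G : Finset T) : Set T) := by
      rw [Finset.coe_mul]
      intro z hz
      rw [one_mul]
      have hzF : z ∈ colonS R (F : Set T) := by
        intro f hf
        have hzfG : z * f ∈ colonS R (G : Set T) := by
          intro g hg
          rw [mul_assoc]
          exact hz (f * g) (Set.mul_mem_mul hf hg)
        have := h1G (z * f) hzfG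
        simpa using this
      have := h1F z hzF
      simpa using this
    have h1Qmem : (1 : T) ∈ Q := by
      rw [← hQt, mem_tOp]
      exact ⟨F * G, hFG, h1FG⟩
    exact h1Q h1Qmem
  exact ⟨Q, ⟨hQideal, ne_of_one_not_mem R h1Q, hQprime⟩, hQt, hbRQ hbbR⟩

end Aux

/-- a Marot primary ring `R` has exactly one regular prime ideal,
namely `M = (R^• ∖ R^×)·R`, and `M` is a `t`-ideal:
`spec_r(R) = t-spec_r(R) = {M}`. -/
theorem stmt12 {T : Type*} [CommRing T] [Nontrivial T] (R : Subring T)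
    (hreg : ∀ x ∈ reg (R : Set T), IsUnit x)
    (hfr : ∀ t : T, ∃ r ∈ (R : Set T), ∃ s ∈ reg (R : Set T), t * s = r)
    (hmarot : IsMarot R)
    (hprim : IsPrimaryRing R) :
    {P : Set T | IsPrimeIdealOf R P ∧ ∃ x ∈ P, x ∈ reg (R : Set T)}
        = {idealGen R (reg (R : Set T) \ unitsIn (R : Set T))} ∧
    {P : Set T | IsPrimeIdealOf R P ∧ tOp R P = P ∧ ∃ x ∈ P, x ∈ reg (R : Set T)}
        = {idealGen R (reg (R : Set T) \ unitsIn (R : Set T))} := by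
  obtain ⟨b, hb, hbU⟩ : ∃ b ∈ reg (R : Set T), b ∉ unitsIn (R : Set T) := by
    by_contra h
    push_neg at h
    exact hprim.1 (Set.Subset.antisymm h (unitsIn_subset_reg R))
  obtain ⟨Q, hQprime, hQt, hbQ⟩ := exists_prime_t R hreg hb hbU
  set M : Set T := idealGen R (reg (R : Set T) \ unitsIn (R : Set T)) with hM
  have huniq : ∀ P : Set T, IsPrimeIdealOf R P → (∃ x ∈ P, x ∈ reg (R : Set T)) →
      P = M := by
    intro P hP hPreg
    apply Set.Subset.antisymm
    · exact subset_M_of_proper R hmarot hP.1 hPreg (one_not_mem_of_ne R hP.1 hP.2.1)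
    · exact M_subset_prime R hprim hP hPreg
  have hQM : Q = M := huniq Q hQprime ⟨b, hbQ, hb⟩
  have hMprime : IsPrimeIdealOf R M := hQM ▸ hQprime
  have hMt : tOp R M = M := hQM ▸ hQt
  have hMregmem : ∃ x ∈ M, x ∈ reg (R : Set T) :=
    ⟨b, subset_idealGen R ⟨hb, hbU⟩, hb⟩
  constructor
  · ext P
    simp only [Set.mem_setOf_eq, Set.mem_singleton_iff]
    constructor
    · rintro ⟨h1, h2⟩
      exact huniq P h1 h2
    · rintro rfl
      exact ⟨hMprime, hMregmem⟩
  · ext P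
    simp only [Set.mem_setOf_eq, Set.mem_singleton_iff]
    constructor
    · rintro ⟨h1, _, h3⟩
      exact huniq P h1 h3
    · rintro rfl
      exact ⟨hMprime, hMt, hMregmem⟩

end Paper
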